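/- Let H, H_* ∈ R^{d×d} be symmetric positive definite, let B ∈ R^{d×d} be symmetric, and let S ∈ R^{d×τ} have full column rank. Define the projection Z = H^{1/2} S (Sᵀ H S)⁻¹ Sᵀ H^{1/2}, R = H^{1/2}(B − H_*⁻¹)H^{1/2}, and the BFGS update B₊ = BFGS(B, H, S) = G + (I − GH)B(I − HG) with G = S(SᵀHS)⁻¹Sᵀ. Then ‖B₊ − H_*⁻¹‖²_{F(H)} ≤ tr(R(I − Z)R) + ‖H − H_*‖²_{F(H_*⁻¹)}. -/

import Mathlib

open Matrix MeasureTheory Filter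
open scoped Classical

noncomputable section

/-- Vectors in `ℝ^d` with the Euclidean (2-)norm. -/
abbrev Vec (d : ℕ) := EuclideanSpace ℝ (Fin d)

/-- Matrix square root of a positive semidefinite matrix (junk value `0` otherwise). -/
noncomputable def msqrt {d : ℕ} (M : Matrix (Fin d) (Fin d) ℝ) : Matrix (Fin d) (Fin d) ℝ :=
  if h : M.PosSemidef then
    h.1.eigenvectorUnitary * diagonal (Real.sqrt ∘ h.1.eigenvalues) *
      (star h.1.eigenvectorUnitary : Matrix (Fin d) (Fin d) ℝ) else 0

/-- Frobenius norm of a square matrix. -/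
noncomputable def frobNorm {d : ℕ} (M : Matrix (Fin d) (Fin d) ℝ) : ℝ :=
  Real.sqrt (Matrix.trace (Mᵀ * M))

/-- Weighted Frobenius norm `‖W‖_{F(H)} = ‖H^{1/2} W H^{1/2}‖_F`. -/
noncomputable def wFrob {d : ℕ} (H W : Matrix (Fin d) (Fin d) ℝ) : ℝ :=
  frobNorm (msqrt H * W * msqrt H)

/-- Local norm `‖v‖_H = √⟨H v, v⟩`. -/
noncomputable def localNorm {d : ℕ} (H : Matrix (Fin d) (Fin d) ℝ) (v : Vec d) : ℝ :=
  Real.sqrt (inner ℝ (Matrix.toEuclideanLin H v) v : ℝ)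

/-- `f` is self-concordant, expressed through its Hessian map `Hf`:
the Hessian is everywhere positive definite and the local norms at nearby points are
comparable. -/
def SelfConcordant {d : ℕ} (Hf : Vec d → Matrix (Fin d) (Fin d) ℝ) : Prop :=
  (∀ x, (Hf x).PosDef) ∧
  ∀ x y v : Vec d, localNorm (Hf x) (y - x) < 1 → v ≠ 0 →
    1 - localNorm (Hf x) (y - x) ≤ localNorm (Hf y) v / localNorm (Hf x) v ∧
      localNorm (Hf y) v / localNorm (Hf x) v ≤ 1 / (1 - localNorm (Hf x) (y - x))

/-- `g` is the gradient of `f` and `Hf` is its Hessian (the derivative of the gradient). -/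
def IsGradHess {d : ℕ} (f : Vec d → ℝ) (g : Vec d → Vec d)
    (Hf : Vec d → Matrix (Fin d) (Fin d) ℝ) : Prop :=
  (∀ x, HasGradientAt f (g x) x) ∧
  ∀ x, HasFDerivAt g (Matrix.toEuclideanCLM (𝕜 := ℝ) (Hf x) : Vec d →L[ℝ] Vec d) x

/-- Smallest eigenvalue of a symmetric matrix, via the Rayleigh quotient. -/
noncomputable def lambdaMin {d : ℕ} (M : Matrix (Fin d) (Fin d) ℝ) : ℝ :=
  ⨅ v : {v : Vec d // ‖v‖ = 1}, (inner ℝ (Matrix.toEuclideanLin M v.1) v.1 : ℝ)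

/-- Entrywise expectation of a random matrix. -/
noncomputable def expMat {Ω : Type*} [MeasurableSpace Ω] (μ : Measure Ω)
    {m n : ℕ} (M : Ω → Matrix (Fin m) (Fin n) ℝ) : Matrix (Fin m) (Fin n) ℝ :=
  Matrix.of fun i j => ∫ ω, M ω i j ∂μ

/-- The projection matrix `Z = H^{1/2} S (Sᵀ H S)⁻¹ Sᵀ H^{1/2}`. -/
noncomputable def sketchProj {d τ : ℕ} (H : Matrix (Fin d) (Fin d) ℝ)
    (S : Matrix (Fin d) (Fin τ) ℝ) : Matrix (Fin d) (Fin d) ℝ :=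
  msqrt H * S * (Sᵀ * H * S)⁻¹ * Sᵀ * msqrt H

/-- The (randomized) BFGS update
`BFGS(B, H, S) = G + (I - G H) B (I - H G)` with `G = S (Sᵀ H S)⁻¹ Sᵀ`. -/
noncomputable def bfgsUpdate {d τ : ℕ} (B H : Matrix (Fin d) (Fin d) ℝ)
    (S : Matrix (Fin d) (Fin τ) ℝ) : Matrix (Fin d) (Fin d) ℝ :=
  S * (Sᵀ * H * S)⁻¹ * Sᵀ +
    (1 - S * (Sᵀ * H * S)⁻¹ * Sᵀ * H) * B * (1 - H * (S * (Sᵀ * H * S)⁻¹ * Sᵀ))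

/-- Spectral (operator 2-)norm of a matrix. -/
noncomputable def opNorm2 {d : ℕ} (M : Matrix (Fin d) (Fin d) ℝ) : ℝ :=
  ‖(Matrix.toEuclideanCLM (𝕜 := ℝ) M : Vec d →L[ℝ] Vec d)‖

instance matrixMeasurableSpace {m n : Type*} : MeasurableSpace (Matrix m n ℝ) :=
  MeasurableSpace.pi

/-- The sketching matrices `S k` are i.i.d. samples from a common distribution `D`. -/
def IIDSketch {d τ : ℕ} {Ω : Type*} [MeasurableSpace Ω] (μ : Measure Ω)
    (S : ℕ → Ω → Matrix (Fin d) (Fin τ) ℝ) : Prop :=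
  (∀ k, Measurable (S k)) ∧
  ProbabilityTheory.iIndepFun (m := fun _ => matrixMeasurableSpace) S μ ∧
  ∀ k, Measure.map (S k) μ = Measure.map (S 0) μ

end

/-!
In the coordinates `P = H^{1/2}` the BFGS update is `P B₊ P = Z + (1 - Z) (P B P) (1 - Z)`, so with
`Q = 1 - Z`, `T = P (B - H_*⁻¹) P` and `E = 1 - P H_*⁻¹ P` the error is
`P (B₊ - H_*⁻¹) P = Q T Q + (E - Q E Q)`.
Since `Q` is an orthogonal projection, the two summands are orthogonal for the trace inner product
and `‖E - Q E Q‖² = ‖E‖² - ‖Q E Q‖²`; moreover `‖Q T Q‖² ≤ tr (T Q T)`.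
Finally `‖E‖_F = ‖H - H_*‖_{F(H_*⁻¹)}`, as both squares equal `tr ((1 - H_*⁻¹ H)²)`.
-/

namespace Matrix

variable {n m : Type*} [Fintype n] [Fintype m]

section CommRing

variable {R : Type*} [CommRing R]

theorem trace_compress_mul_mul_self {Q : Matrix n n R} (hQ : IsIdempotentElem Q)
    (X Y : Matrix n n R) : trace (Q * X * Q * Y * Q) = trace (Q * X * Q * Y) := by
  rw [trace_mul_comm, ← mul_assoc, ← mul_assoc, ← mul_assoc, hQ.eq]

theorem trace_compress_mul_sub_compress {Q : Matrix n n R} (hQ : IsIdempotentElem Q)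
    (X Y : Matrix n n R) : trace (Q * X * Q * (Y - Q * Y * Q)) = 0 := by
  simp only [mul_sub, trace_sub, ← mul_assoc, hQ.mul_mul_self, trace_compress_mul_mul_self hQ,
    sub_self]

theorem trace_sub_compress_mul_self {Q : Matrix n n R} (hQ : IsIdempotentElem Q)
    (Y : Matrix n n R) :
    trace ((Y - Q * Y * Q) * (Y - Q * Y * Q)) =
      trace (Y * Y) - trace (Q * Y * Q * (Q * Y * Q)) := by
  have hcross := trace_compress_mul_sub_compress hQ Y Y
  rw [mul_sub, trace_sub] at hcross
  rw [sub_mul, trace_sub, trace_compress_mul_sub_compress hQ, mul_sub, trace_sub,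
    trace_mul_comm Y (Q * Y * Q)]
  linear_combination -hcross

theorem trace_conj_mul_conj {K M : Matrix n n R} (hK : K * K = M) (X : Matrix n n R) :
    trace (K * X * K * (K * X * K)) = trace (M * X * (M * X)) := by
  rw [← hK]
  calc trace (K * X * K * (K * X * K)) = trace (K * (X * K * K * X * K)) := by
        simp only [mul_assoc]
    _ = trace ((K * K * X * K * K) * X) := by
        rw [trace_mul_comm, trace_mul_comm _ X]; simp only [mul_assoc]
    _ = trace (K * K * X * (K * K * X)) := by simp only [mul_assoc]

theorem IsSymm.conj {X : Matrix n n R} (hX : X.IsSymm) {K : Matrix n n R} (hK : K.IsSymm) :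
    (K * X * K).IsSymm := by
  simp only [IsSymm, transpose_mul, hK.eq, hX.eq, mul_assoc]

variable [DecidableEq n]

theorem trace_one_sub_conj_mul_self {K M : Matrix n n R} (hK : K * K = M) (X : Matrix n n R) :
    trace ((1 - K * X * K) * (1 - K * X * K)) = trace ((1 - M * X) * (1 - M * X)) := by
  have hlin : trace (K * X * K) = trace (M * X) := by
    rw [trace_mul_comm, ← mul_assoc, hK]
  simp only [sub_mul, mul_sub, one_mul, mul_one, trace_sub, hlin, trace_conj_mul_conj hK]

theorem trace_one_sub_mul_mul_self_comm (X Y : Matrix n n R) :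
    trace ((1 - X * Y) * (1 - X * Y)) = trace ((1 - Y * X) * (1 - Y * X)) := by
  simp only [sub_mul, mul_sub, one_mul, mul_one, trace_sub, trace_mul_comm X Y, mul_assoc,
    trace_mul_comm X (Y * (X * Y))]

theorem conj_bfgs {P H G : Matrix n n R} (hP : P * P = H) (B : Matrix n n R) :
    P * (G + (1 - G * H) * B * (1 - H * G)) * P =
      P * G * P + (1 - P * G * P) * (P * B * P) * (1 - P * G * P) := by
  have hl : P * (1 - G * H) = (1 - P * G * P) * P := by
    simp only [mul_sub, sub_mul, mul_one, one_mul, ← hP, mul_assoc]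
  have hr : (1 - H * G) * P = P * (1 - P * G * P) := by
    simp only [mul_sub, sub_mul, mul_one, one_mul, ← hP, mul_assoc]
  calc P * (G + (1 - G * H) * B * (1 - H * G)) * P
      = P * G * P + P * (1 - G * H) * B * ((1 - H * G) * P) := by
        simp only [mul_add, add_mul, mul_assoc]
    _ = _ := by rw [hl, hr]; simp only [mul_assoc]

end CommRing

section Real

theorem trace_transpose_mul_self_nonneg (M : Matrix m n ℝ) : 0 ≤ trace (Mᵀ * M) := by
  simpa using (posSemidef_conjTranspose_mul_self M).trace_nonneg

theorem mulVec_injective_of_rank_eq_card {k : Type*} [Fintype k] [DecidableEq m]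
    {S : Matrix k m ℝ} (hS : S.rank = Fintype.card m) : Function.Injective S.mulVec := by
  rw [mulVec_injective_iff, linearIndependent_iff_card_eq_finrank_span, ← hS,
    rank_eq_finrank_span_cols]
  rfl

theorem PosDef.transpose_mul_mul_of_rank_eq_card [DecidableEq m] {H : Matrix n n ℝ}
    (hH : H.PosDef) {S : Matrix n m ℝ} (hS : S.rank = Fintype.card m) : (Sᵀ * H * S).PosDef := by
  simpa using hH.conjTranspose_mul_mul_same (mulVec_injective_of_rank_eq_card hS)

variable {Q : Matrix n n ℝ}

theorem trace_compress_mul_self_le (hQ : IsIdempotentElem Q) (hQs : Q.IsSymm)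
    {X : Matrix n n ℝ} (hX : X.IsSymm) : trace (Q * X * Q * (Q * X * Q)) ≤ trace (X * Q * X) := by
  -- the gap is `‖Q X (1 - Q)‖_F²`
  have hgap := trace_transpose_mul_self_nonneg (Q * X - Q * X * Q)
  have hcyc : trace (X * Q * X * Q) = trace (Q * X * Q * X) := by
    rw [trace_mul_comm]; simp only [mul_assoc]
  simp only [transpose_sub, transpose_mul, hQs.eq, hX.eq, sub_mul, mul_sub, trace_sub] at hgap
  simp only [← mul_assoc, hQ.mul_mul_self, trace_compress_mul_mul_self hQ] at hgap ⊢
  linarith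

theorem trace_transpose_mul_self_compress_add_sub_compress_le (hQ : IsIdempotentElem Q)
    (hQs : Q.IsSymm) {X Y : Matrix n n ℝ} (hX : X.IsSymm) (hY : Y.IsSymm) :
    trace ((Q * X * Q + (Y - Q * Y * Q))ᵀ * (Q * X * Q + (Y - Q * Y * Q))) ≤
      trace (X * Q * X) + trace (Yᵀ * Y) := by
  have hsymm := (hX.conj hQs).add (hY.sub (hY.conj hQs))
  have hcross := trace_compress_mul_sub_compress hQ X Y
  have hcross' : trace ((Y - Q * Y * Q) * (Q * X * Q)) = 0 := by rw [trace_mul_comm, hcross]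
  have hdrop : 0 ≤ trace (Q * Y * Q * (Q * Y * Q)) := by
    simpa only [(hY.conj hQs).eq] using trace_transpose_mul_self_nonneg (Q * Y * Q)
  rw [hsymm.eq, hY.eq, add_mul, mul_add, mul_add, trace_add, trace_add, trace_add, hcross, hcross',
    trace_sub_compress_mul_self hQ]
  linarith [trace_compress_mul_self_le hQ hQs hX]

end Real

end Matrix

theorem frobNorm_sq {d : ℕ} (M : Matrix (Fin d) (Fin d) ℝ) : frobNorm M ^ 2 = trace (Mᵀ * M) :=
  Real.sq_sqrt (trace_transpose_mul_self_nonneg M)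

theorem msqrt_mul_self {d : ℕ} {M : Matrix (Fin d) (Fin d) ℝ} (hM : M.PosSemidef) :
    msqrt M * msqrt M = M := by
  have hU : ∀ X : Matrix (Fin d) (Fin d) ℝ,
      star (hM.1.eigenvectorUnitary : Matrix (Fin d) (Fin d) ℝ) *
        ((hM.1.eigenvectorUnitary : Matrix (Fin d) (Fin d) ℝ) * X) = X := by
    intro X
    rw [← mul_assoc, Unitary.coe_star_mul_self, one_mul]
  have hD : diagonal (Real.sqrt ∘ hM.1.eigenvalues) * diagonal (Real.sqrt ∘ hM.1.eigenvalues) =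
      diagonal (RCLike.ofReal ∘ hM.1.eigenvalues) := by
    rw [diagonal_mul_diagonal]
    congr 1
    funext i
    simp [Real.mul_self_sqrt (hM.eigenvalues_nonneg i)]
  conv_rhs => rw [hM.1.spectral_theorem, Unitary.conjStarAlgAut_apply, ← hD]
  rw [msqrt, dif_pos hM]
  simp only [mul_assoc, hU]

theorem msqrt_isSymm {d : ℕ} (M : Matrix (Fin d) (Fin d) ℝ) : (msqrt M).IsSymm := by
  unfold msqrt
  split_ifs
  · simp only [IsSymm, transpose_mul, star_eq_conjTranspose, conjTranspose_eq_transpose_of_trivial,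
      transpose_transpose, diagonal_transpose, mul_assoc]
  · exact isSymm_zero

section Sketch

variable {d τ : ℕ} {H : Matrix (Fin d) (Fin d) ℝ} {S : Matrix (Fin d) (Fin τ) ℝ}

theorem isIdempotentElem_sketchProj (hH : H.PosDef) (hS : S.rank = τ) :
    IsIdempotentElem (sketchProj H S) := by
  have hN : (Sᵀ * H * S)⁻¹ * (Sᵀ * H * S) = 1 :=
    nonsing_inv_mul _ ((hH.transpose_mul_mul_of_rank_eq_card (by simpa using hS)).isUnit.map
      detMonoidHom)
  calc sketchProj H S * sketchProj H S
      = msqrt H * S * ((Sᵀ * H * S)⁻¹ * (Sᵀ * (msqrt H * msqrt H) * S)) * (Sᵀ * H * S)⁻¹ *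
          Sᵀ * msqrt H := by simp only [sketchProj, Matrix.mul_assoc]
    _ = sketchProj H S := by rw [msqrt_mul_self hH.posSemidef, hN, Matrix.mul_one]; rfl

theorem sketchProj_isSymm (hH : H.IsSymm) : (sketchProj H S).IsSymm := by
  simp only [sketchProj, IsSymm, transpose_mul, (msqrt_isSymm H).eq, transpose_nonsing_inv, hH.eq,
    transpose_transpose, Matrix.mul_assoc]

theorem msqrt_mul_bfgsUpdate_mul_msqrt (hH : H.PosSemidef) (B : Matrix (Fin d) (Fin d) ℝ) :
    msqrt H * bfgsUpdate B H S * msqrt H =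
      sketchProj H S + (1 - sketchProj H S) * (msqrt H * B * msqrt H) * (1 - sketchProj H S) := by
  rw [bfgsUpdate, conj_bfgs (msqrt_mul_self hH)]
  simp only [sketchProj, Matrix.mul_assoc]

end Sketch

theorem wFrob_inv_sub {d : ℕ} {H Hstar : Matrix (Fin d) (Fin d) ℝ} (hH : H.PosSemidef)
    (hHstar : Hstar.PosDef) :
    wFrob Hstar⁻¹ (H - Hstar) = frobNorm (1 - msqrt H * Hstar⁻¹ * msqrt H) := by
  have hHs : H.IsSymm := isHermitian_iff_isSymm.mp hH.isHermitian
  have hHstars : Hstar.IsSymm := isHermitian_iff_isSymm.mp hHstar.isHermitian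
  have hinv : Hstar⁻¹ * Hstar = 1 := nonsing_inv_mul _ (hHstar.isUnit.map detMonoidHom)
  unfold wFrob frobNorm
  congr 1
  rw [((hHs.sub hHstars).conj (msqrt_isSymm _)).eq,
    (isSymm_one.sub (hHstars.inv.conj (msqrt_isSymm _))).eq,
    trace_conj_mul_conj (msqrt_mul_self hHstar.inv.posSemidef),
    trace_one_sub_conj_mul_self (msqrt_mul_self hH), trace_one_sub_mul_mul_self_comm H,
    mul_sub, hinv, ← neg_sub 1, neg_mul_neg]

/-- **One-step contraction bound for the randomized BFGS matrix update.** -/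
theorem bfgs_update_contraction
    {d τ : ℕ} (H Hstar : Matrix (Fin d) (Fin d) ℝ)
    (hH : H.PosDef) (hHstar : Hstar.PosDef)
    (B : Matrix (Fin d) (Fin d) ℝ) (hB : B.IsSymm)
    (S : Matrix (Fin d) (Fin τ) ℝ) (hS : S.rank = τ) :
    wFrob H (bfgsUpdate B H S - Hstar⁻¹) ^ 2 ≤
      Matrix.trace (msqrt H * (B - Hstar⁻¹) * msqrt H * (1 - sketchProj H S) *
          (msqrt H * (B - Hstar⁻¹) * msqrt H)) +
        wFrob Hstar⁻¹ (H - Hstar) ^ 2 := by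
  set P := msqrt H
  set Q := 1 - sketchProj H S
  set E := 1 - P * Hstar⁻¹ * P
  have hQ : IsIdempotentElem Q := (isIdempotentElem_sketchProj hH hS).one_sub
  have hHs : H.IsSymm := isHermitian_iff_isSymm.mp hH.isHermitian
  have hHstarinv : (Hstar⁻¹).IsSymm := (isHermitian_iff_isSymm.mp hHstar.isHermitian).inv
  have hdecomp : P * (bfgsUpdate B H S - Hstar⁻¹) * P =
      Q * (P * (B - Hstar⁻¹) * P) * Q + (E - Q * E * Q) := by
    have hQE : Q * E * Q = Q - Q * (P * Hstar⁻¹ * P) * Q := by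
      simp only [E, mul_sub, sub_mul, mul_one, hQ.eq]
    rw [mul_sub, sub_mul, msqrt_mul_bfgsUpdate_mul_msqrt hH.posSemidef, hQE]
    simp only [Q, E, mul_sub, sub_mul]
    abel
  rw [wFrob, hdecomp, wFrob_inv_sub hH.posSemidef hHstar, frobNorm_sq, frobNorm_sq]
  exact trace_transpose_mul_self_compress_add_sub_compress_le hQ
    (isSymm_one.sub (sketchProj_isSymm hHs)) ((hB.sub hHstarinv).conj (msqrt_isSymm H))
    (isSymm_one.sub (hHstarinv.conj (msqrt_isSymm H)))
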